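/- Fix real parameters σ > 0, γ > 0, g > 0 and η ≠ 0; set ω = σγη and β = 2σ²/g, and define u(t) = cosh(ωt) + (ω/β)sinh(ωt), v(t) = cosh(ωt) + (β/ω)sinh(ωt), a(t) = g·v(t)/u(t), P(t) = p₀/u(t), Q(t) = (Q₀ − ηβ(u(t) − 1)/ω²)/v(t) for given p₀, Q₀ ∈ ℝ. Then the function D(t) = (1/(2γ²))·(t·v(t) − sinh(ωt)/ω − 2β(cosh(ωt) − 1)/ω²)/v(t) − σ²ηQ₀·(cosh(ωt) − 1)/(ω²·v(t)) + (σ²Q₀²/2)·sinh(ωt)/(ω·v(t)) + (γ²η²p₀²/2)·sinh(ωt)/(ω·u(t)) satisfies D(0) = 0 and, for every t ≥ 0, D'(t) = (σ²/2)·Q(t)² + (γ²η²/2)·P(t)². -/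

import Mathlib

/-!
Write `v = cosh (ω t) + k sinh (ω t)` with `k = β / ω`, and `u` likewise with `k = ω / β`.
Because `cosh² - sinh² = 1`, the quotients `sinh (ω t) / v` and `(cosh (ω t) - 1) / v` have
derivatives `ω / v²` and `ω w / v²`, where `w = sinh (ω t) + k (cosh (ω t) - 1) = β (u - 1) / ω`,
and `v² - 1 - 2 k w = w²`, so the first summand of `D` has derivative `w² / (2 γ² v²)`.
Expanding the square in `Q = (Q₀ - η w / ω) / v` and using `ω² = σ² γ² η²` then matches `D'`
term by term. For `t ≥ 0` both `u` and `v` are at least `1`, so no denominator vanishes.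
-/

open Real Topology

section CoshAddMulSinh

variable (ω k : ℝ) {t : ℝ}

theorem cosh_add_mul_sinh_sq_sub (x : ℝ) :
    (cosh x + k * sinh x) ^ 2 - 1 - 2 * k * (sinh x + k * (cosh x - 1)) =
      (sinh x + k * (cosh x - 1)) ^ 2 := by
  linear_combination (1 - k ^ 2) * cosh_sq x

theorem one_le_cosh_add_mul_sinh (hk : 0 ≤ k * ω) (ht : 0 ≤ t) :
    1 ≤ cosh (ω * t) + k * sinh (ω * t) := by
  have hks : 0 ≤ k * sinh (ω * t) := by
    rcases lt_trichotomy ω 0 with hω | rfl | hω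
    · have hk' : k ≤ 0 := nonpos_of_mul_nonneg_left hk hω
      have hs : sinh (ω * t) ≤ 0 := sinh_nonpos_iff.2 (mul_nonpos_of_nonpos_of_nonneg hω.le ht)
      exact mul_nonneg_of_nonpos_of_nonpos hk' hs
    · simp
    · have hk' : 0 ≤ k := nonneg_of_mul_nonneg_left hk hω
      exact mul_nonneg hk' (sinh_nonneg_iff.2 (mul_nonneg hω.le ht))
  linarith [one_le_cosh (ω * t)]

theorem hasDerivAt_cosh_mul (t : ℝ) :
    HasDerivAt (fun x => cosh (ω * x)) (ω * sinh (ω * t)) t := by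
  simpa [mul_comm] using ((hasDerivAt_id t).const_mul ω).cosh

theorem hasDerivAt_sinh_mul (t : ℝ) :
    HasDerivAt (fun x => sinh (ω * x)) (ω * cosh (ω * t)) t := by
  simpa [mul_comm] using ((hasDerivAt_id t).const_mul ω).sinh

theorem hasDerivAt_cosh_add_mul_sinh (t : ℝ) :
    HasDerivAt (fun x => cosh (ω * x) + k * sinh (ω * x))
      (ω * (sinh (ω * t) + k * cosh (ω * t))) t :=
  ((hasDerivAt_cosh_mul ω t).add ((hasDerivAt_sinh_mul ω t).const_mul k)).congr_deriv (by ring)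

theorem hasDerivAt_sinh_div_cosh_add_mul_sinh (h : cosh (ω * t) + k * sinh (ω * t) ≠ 0) :
    HasDerivAt (fun x => sinh (ω * x) / (cosh (ω * x) + k * sinh (ω * x)))
      (ω / (cosh (ω * t) + k * sinh (ω * t)) ^ 2) t := by
  refine ((hasDerivAt_sinh_mul ω t).div (hasDerivAt_cosh_add_mul_sinh ω k t) h).congr_deriv ?_
  rw [div_left_inj' (pow_ne_zero 2 h)]
  linear_combination ω * cosh_sq (ω * t)

theorem hasDerivAt_cosh_sub_one_div_cosh_add_mul_sinh
    (h : cosh (ω * t) + k * sinh (ω * t) ≠ 0) :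
    HasDerivAt (fun x => (cosh (ω * x) - 1) / (cosh (ω * x) + k * sinh (ω * x)))
      (ω * (sinh (ω * t) + k * (cosh (ω * t) - 1)) / (cosh (ω * t) + k * sinh (ω * t)) ^ 2) t := by
  refine (((hasDerivAt_cosh_mul ω t).sub_const 1).div
    (hasDerivAt_cosh_add_mul_sinh ω k t) h).congr_deriv ?_
  rw [div_left_inj' (pow_ne_zero 2 h)]
  linear_combination -ω * k * cosh_sq (ω * t)

theorem hasDerivAt_mul_sub_div_cosh_add_mul_sinh (hω : ω ≠ 0)
    (h : cosh (ω * t) + k * sinh (ω * t) ≠ 0) :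
    HasDerivAt (fun x => (x * (cosh (ω * x) + k * sinh (ω * x)) - sinh (ω * x) / ω
        - 2 * k * (cosh (ω * x) - 1) / ω) / (cosh (ω * x) + k * sinh (ω * x)))
      ((sinh (ω * t) + k * (cosh (ω * t) - 1)) ^ 2 / (cosh (ω * t) + k * sinh (ω * t)) ^ 2) t := by
  have hcont : ContinuousAt (fun x => cosh (ω * x) + k * sinh (ω * x)) t :=
    (hasDerivAt_cosh_add_mul_sinh ω k t).continuousAt
  have hev : (fun x => (x * (cosh (ω * x) + k * sinh (ω * x)) - sinh (ω * x) / ω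
        - 2 * k * (cosh (ω * x) - 1) / ω) / (cosh (ω * x) + k * sinh (ω * x))) =ᶠ[𝓝 t]
      fun x => x - 1 / ω * (sinh (ω * x) / (cosh (ω * x) + k * sinh (ω * x)))
        - 2 * k / ω * ((cosh (ω * x) - 1) / (cosh (ω * x) + k * sinh (ω * x))) := by
    -- `x * v x / v x = x` only where `v x ≠ 0`
    filter_upwards [hcont.eventually_ne h] with x hx
    rw [sub_div, sub_div, mul_div_cancel_right₀ _ hx]
    ring
  refine ((((hasDerivAt_id' t).sub
    ((hasDerivAt_sinh_div_cosh_add_mul_sinh ω k h).const_mul _)).sub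
    ((hasDerivAt_cosh_sub_one_div_cosh_add_mul_sinh ω k h).const_mul _)).congr_of_eventuallyEq
    hev).congr_deriv ?_
  rw [← cosh_add_mul_sinh_sq_sub k (ω * t)]
  field_simp

end CoshAddMulSinh

theorem stmt2_general (σ γ g η : ℝ) (hσ : 0 < σ) (hγ : 0 < γ) (hg : 0 < g) (hη : η ≠ 0)
    (p₀ Q₀ : ℝ) (ω β : ℝ) (hω : ω = σ * γ * η) (hβ : β = 2 * σ ^ 2 / g)
    (u v P Q D : ℝ → ℝ)
    (hu : ∀ t, u t = Real.cosh (ω * t) + (ω / β) * Real.sinh (ω * t))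
    (hv : ∀ t, v t = Real.cosh (ω * t) + (β / ω) * Real.sinh (ω * t))
    (hP : ∀ t, P t = p₀ / u t)
    (hQ : ∀ t, Q t = (Q₀ - η * β * (u t - 1) / ω ^ 2) / v t)
    (hD : ∀ t, D t =
      (1 / (2 * γ ^ 2)) *
          ((t * v t - Real.sinh (ω * t) / ω - 2 * β * (Real.cosh (ω * t) - 1) / ω ^ 2) / v t)
        - σ ^ 2 * η * Q₀ * (Real.cosh (ω * t) - 1) / (ω ^ 2 * v t)
        + (σ ^ 2 * Q₀ ^ 2 / 2) * Real.sinh (ω * t) / (ω * v t)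
        + (γ ^ 2 * η ^ 2 * p₀ ^ 2 / 2) * Real.sinh (ω * t) / (ω * u t)) :
    D 0 = 0 ∧
    ∀ t ≥ 0, HasDerivAt D (σ ^ 2 / 2 * (Q t) ^ 2 + γ ^ 2 * η ^ 2 / 2 * (P t) ^ 2) t := by
  have hω0 : ω ≠ 0 := hω ▸ by positivity
  have hβ0 : 0 < β := hβ ▸ by positivity
  refine ⟨by simp [hD 0], fun t ht => ?_⟩
  have hu0 : cosh (ω * t) + ω / β * sinh (ω * t) ≠ 0 := (one_pos.trans_le
    (one_le_cosh_add_mul_sinh ω _ (by rw [div_mul_eq_mul_div, ← sq]; positivity) ht)).ne'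
  have hv0 : cosh (ω * t) + β / ω * sinh (ω * t) ≠ 0 := (one_pos.trans_le
    (one_le_cosh_add_mul_sinh ω _ (by rw [div_mul_cancel₀ _ hω0]; positivity) ht)).ne'
  have hD' : D = fun x => 1 / (2 * γ ^ 2) * ((x * v x - sinh (ω * x) / ω
        - 2 * (β / ω) * (cosh (ω * x) - 1) / ω) / v x)
      - σ ^ 2 * η * Q₀ / ω ^ 2 * ((cosh (ω * x) - 1) / v x)
      + σ ^ 2 * Q₀ ^ 2 / (2 * ω) * (sinh (ω * x) / v x)
      + γ ^ 2 * η ^ 2 * p₀ ^ 2 / (2 * ω) * (sinh (ω * x) / u x) :=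
    funext fun x => by rw [hD x]; ring
  obtain rfl : u = _ := funext hu
  obtain rfl : v = _ := funext hv
  rw [hD']
  refine (((((hasDerivAt_mul_sub_div_cosh_add_mul_sinh ω _ hω0 hv0).const_mul _).sub
    ((hasDerivAt_cosh_sub_one_div_cosh_add_mul_sinh ω _ hv0).const_mul _)).add
    ((hasDerivAt_sinh_div_cosh_add_mul_sinh ω _ hv0).const_mul _)).add
    ((hasDerivAt_sinh_div_cosh_add_mul_sinh ω _ hu0).const_mul _)).congr_deriv ?_
  have hw : η * β * (cosh (ω * t) + ω / β * sinh (ω * t) - 1) / ω ^ 2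
      = η * (sinh (ω * t) + β / ω * (cosh (ω * t) - 1)) / ω := by
    field_simp; ring
  rw [hP, hQ, hw]
  subst hω
  field_simp
  ring

/-- The explicit damping exponent
`D(t) = (1/(2γ²))(t·v − sinh(ωt)/ω − 2β(cosh(ωt)−1)/ω²)/v
        − σ²ηQ₀(cosh(ωt)−1)/(ω²v) + (σ²Q₀²/2)sinh(ωt)/(ωv)
        + (γ²η²p₀²/2)sinh(ωt)/(ωu)`
satisfies `D(0) = 0` and `D'(t) = (σ²/2)Q(t)² + (γ²η²/2)P(t)²` for `t ≥ 0`. -/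
theorem stmt2 (σ γ g η : ℝ) (hσ : 0 < σ) (hγ : 0 < γ) (hg : 0 < g) (hη : η ≠ 0)
    (p₀ Q₀ : ℝ) (ω β : ℝ) (hω : ω = σ * γ * η) (hβ : β = 2 * σ ^ 2 / g)
    (u v a P Q D : ℝ → ℝ)
    (hu : ∀ t, u t = Real.cosh (ω * t) + (ω / β) * Real.sinh (ω * t))
    (hv : ∀ t, v t = Real.cosh (ω * t) + (β / ω) * Real.sinh (ω * t))
    (ha : ∀ t, a t = g * v t / u t)
    (hP : ∀ t, P t = p₀ / u t)
    (hQ : ∀ t, Q t = (Q₀ - η * β * (u t - 1) / ω ^ 2) / v t)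
    (hD : ∀ t, D t =
      (1 / (2 * γ ^ 2)) *
          ((t * v t - Real.sinh (ω * t) / ω - 2 * β * (Real.cosh (ω * t) - 1) / ω ^ 2) / v t)
        - σ ^ 2 * η * Q₀ * (Real.cosh (ω * t) - 1) / (ω ^ 2 * v t)
        + (σ ^ 2 * Q₀ ^ 2 / 2) * Real.sinh (ω * t) / (ω * v t)
        + (γ ^ 2 * η ^ 2 * p₀ ^ 2 / 2) * Real.sinh (ω * t) / (ω * u t)) :
    D 0 = 0 ∧
    ∀ t ≥ 0, HasDerivAt D (σ ^ 2 / 2 * (Q t) ^ 2 + γ ^ 2 * η ^ 2 / 2 * (P t) ^ 2) t :=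
  stmt2_general σ γ g η hσ hγ hg hη p₀ Q₀ ω β hω hβ u v P Q D hu hv hP hQ hD
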